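/- Fix κ > 0 and δ̄ > 0, and for 0 < ε < 1 set ū = ū(ε) = −1 + ε^{2/3}|ln ε|^{1/3}·δ̄. There exist C > 0 and ε₀ ∈ (0,1) such that for every 0 < ε ≤ ε₀: if A ⊆ ℝ² is a ℤ²-periodic measurable set that minimizes E, i.e. E[A] ≤ E[B] for every ℤ²-periodic measurable set B, then |A ∩ Q| ≤ C·ε^{2/3}|ln ε|^{1/3} and H¹(∂A ∩ Q) ≤ C·ε^{1/3}|ln ε|^{2/3}. (In the rescaled variables of the paper these bounds read |Ω̄⁺| ≤ C|ln ε| and |∂Ω̄⁺| ≤ C|ln ε|.) -/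

import Mathlib

open MeasureTheory Real ENNReal NNReal

noncomputable section

/-- The unit cell `Q = [0,1)^d` in `ℝ^d`. -/
def Qcell (d : ℕ) : Set (EuclideanSpace ℝ (Fin d)) :=
  WithLp.ofLp ⁻¹' (Set.univ.pi fun _ => Set.Ico (0 : ℝ) 1)

/-- The integer vector `n` viewed as a point of `ℝ^d`. -/
def zvec (d : ℕ) (n : Fin d → ℤ) : EuclideanSpace ℝ (Fin d) :=
  WithLp.toLp 2 (fun i => (n i : ℝ))

/-- A set `A ⊆ ℝ^d` is `ℤ^d`-periodic if `A + n = A` for every `n ∈ ℤ^d`. -/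
def IsPeriodicSet (d : ℕ) (A : Set (EuclideanSpace ℝ (Fin d))) : Prop :=
  ∀ (n : Fin d → ℤ) (x : EuclideanSpace ℝ (Fin d)), x + zvec d n ∈ A ↔ x ∈ A

/-- Fourier coefficient over the unit cell: `f̂_q = ∫_Q f(x) e^{-2πi q·x} dx`. -/
def fCoeff (d : ℕ) (f : EuclideanSpace ℝ (Fin d) → ℝ) (q : Fin d → ℤ) : ℂ :=
  ∫ x in Qcell d,
    (f x : ℂ) * Complex.exp (-(2 * Real.pi * Complex.I) * (∑ i, (q i : ℝ) * x i : ℝ))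

/-- The function `2·1_A - 1 - ū`. -/
def uSet (d : ℕ) (ub : ℝ) (A : Set (EuclideanSpace ℝ (Fin d))) :
    EuclideanSpace ℝ (Fin d) → ℝ :=
  fun x => A.indicator (fun _ => (2 : ℝ)) x - 1 - ub

/-- The screened Coulomb (nonlocal) part of the sharp interface energy, in Fourier form:
`(1/2)·∑_{q ∈ ℤ^d} |â_q|²/(κ² + 4π²|q|²)` where `â_q` is the Fourier coefficient
of `2·1_A − 1 − ū`. -/
def nonlocalSharp (d : ℕ) (κ ub : ℝ) (A : Set (EuclideanSpace ℝ (Fin d))) : ℝ :=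
  (1 / 2) * ∑' q : Fin d → ℤ,
    (‖fCoeff d (uSet d ub A) q‖) ^ 2
      / (κ ^ 2 + 4 * Real.pi ^ 2 * ∑ i, ((q i : ℝ)) ^ 2)

/-- The sharp interface energy
`E[A] = ε·H^{d-1}(∂A ∩ Q) + (1/2)·∑_{q ∈ ℤ^d} |â_q|²/(κ² + 4π²|q|²)`,
valued in `ℝ≥0∞` since the perimeter term may be infinite. -/
def sharpEnergy (d : ℕ) (κ ε ub : ℝ) (A : Set (EuclideanSpace ℝ (Fin d))) : ℝ≥0∞ :=
  ENNReal.ofReal ε * μH[(d : ℝ) - 1] (frontier A ∩ Qcell d)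
    + ENNReal.ofReal (nonlocalSharp d κ ub A)


/-- The background charge `ū(ε) = −1 + ε^{2/3}·|ln ε|^{1/3}·δ̄`. -/
def ubar (δ ε : ℝ) : ℝ :=
  -1 + ε ^ ((2 : ℝ) / 3) * |Real.log ε| ^ ((1 : ℝ) / 3) * δ

/-! Comparison with the empty set. Since `2·1_∅ − 1 − ū` is constant, only its zero mode survives and
`E[∅] = (1 + ū)² / (2κ²)`. For a minimizer `A`, the perimeter term gives `ε·H¹(∂A ∩ Q) ≤ E[∅]`, while the
zero mode of its nonlocal energy, `(2|A ∩ Q| − (1 + ū))² / (2κ²)`, is also at most `E[∅]`; hence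
`|A ∩ Q| ≤ 1 + ū`. With `1 + ū = δ̄ ε^{2/3} |ln ε|^{1/3}` both bounds follow. Bounding the nonlocal energy
below by its zero mode needs the series to converge, which is Bessel's inequality for the orthonormal
characters `x ↦ e^{2πi q·x}` of `L²(Q)`. -/

lemma setIntegral_Ico_exp_int_mul (n : ℤ) :
    ∫ t in Set.Ico (0 : ℝ) 1, Complex.exp ((-(2 * π * Complex.I) * n) * t) =
      if n = 0 then 1 else 0 := by
  rw [integral_Ico_eq_integral_Ioo, ← integral_Ioc_eq_integral_Ioo,
    ← intervalIntegral.integral_of_le zero_le_one]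
  split_ifs with hn
  · simp [hn]
  have hc : -(2 * π * Complex.I) * (n : ℂ) ≠ 0 :=
    mul_ne_zero (by simp [Complex.I_ne_zero, Real.pi_ne_zero]) (by exact_mod_cast hn)
  have h1 : Complex.exp (-(2 * π * Complex.I) * n * (1 : ℝ)) = 1 := by
    rw [← Complex.exp_int_mul_two_pi_mul_I (-n)]
    push_cast
    ring_nf
  rw [integral_exp_mul_complex hc, h1]
  simp

lemma measurableSet_Qcell (d : ℕ) : MeasurableSet (Qcell d) :=
  (MeasurableSet.univ_pi fun _ => measurableSet_Ico).preimage (WithLp.measurable_ofLp _ _)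

lemma volume_Qcell (d : ℕ) : volume (Qcell d) = 1 := by
  have h := (EuclideanSpace.volume_preserving_symm_measurableEquiv_toLp (Fin d)).measure_preimage
    (MeasurableSet.univ_pi fun _ : Fin d => measurableSet_Ico (a := (0 : ℝ)) (b := 1)).nullMeasurableSet
  refine h.trans ?_
  simp [volume_pi, Measure.pi_pi]

instance (d : ℕ) : IsFiniteMeasure (volume.restrict (Qcell d)) :=
  ⟨by rw [Measure.restrict_apply_univ, volume_Qcell]; exact one_lt_top⟩

lemma setIntegral_Qcell_prod (d : ℕ) (g : Fin d → ℝ → ℂ) :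
    ∫ x in Qcell d, ∏ i, g i (x i) = ∏ i, ∫ t in Set.Ico (0 : ℝ) 1, g i t := by
  have hQ : MeasurableSet (Set.univ.pi fun _ : Fin d => Set.Ico (0 : ℝ) 1) :=
    MeasurableSet.univ_pi fun _ => measurableSet_Ico
  have hpull := (EuclideanSpace.volume_preserving_symm_measurableEquiv_toLp (Fin d)).setIntegral_preimage_emb
    (MeasurableEquiv.toLp 2 (Fin d → ℝ)).symm.measurableEmbedding
    (fun y : Fin d → ℝ => ∏ i, g i (y i)) (Set.univ.pi fun _ => Set.Ico (0 : ℝ) 1)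
  change (∫ x in Qcell d, ∏ i, g i (x i)) = _ at hpull
  have hind : (Set.univ.pi fun _ : Fin d => Set.Ico (0 : ℝ) 1).indicator (fun y => ∏ i, g i (y i)) =
      fun y => ∏ i, (Set.Ico (0 : ℝ) 1).indicator (g i) (y i) := by
    funext y
    by_cases hy : y ∈ Set.univ.pi fun _ : Fin d => Set.Ico (0 : ℝ) 1
    · rw [Set.indicator_of_mem hy]
      exact Finset.prod_congr rfl fun i _ => (Set.indicator_of_mem (hy i (Set.mem_univ i)) _).symm
    · obtain ⟨i, hi⟩ : ∃ i, y i ∉ Set.Ico (0 : ℝ) 1 := by simpa [Set.mem_univ_pi] using hy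
      rw [Set.indicator_of_notMem hy, Finset.prod_eq_zero (Finset.mem_univ i)]
      exact Set.indicator_of_notMem hi _
  rw [hpull, ← integral_indicator hQ, hind, volume_pi, integral_fintype_prod_eq_prod]
  exact Finset.prod_congr rfl fun i _ => integral_indicator measurableSet_Ico

lemma setIntegral_Qcell_exp (d : ℕ) (q : Fin d → ℤ) :
    ∫ x in Qcell d, Complex.exp (-(2 * π * Complex.I) * ((∑ i, (q i : ℝ) * x i : ℝ) : ℂ)) =
      if q = 0 then 1 else 0 := by
  have hprod : ∀ x : EuclideanSpace ℝ (Fin d),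
      Complex.exp (-(2 * π * Complex.I) * ((∑ i, (q i : ℝ) * x i : ℝ) : ℂ)) =
        ∏ i, Complex.exp ((-(2 * π * Complex.I) * (q i : ℂ)) * (x i : ℂ)) := by
    intro x
    rw [← Complex.exp_sum, Complex.ofReal_sum, Finset.mul_sum]
    exact congrArg _ (Finset.sum_congr rfl fun i _ => by push_cast; ring)
  simp_rw [hprod]
  rw [setIntegral_Qcell_prod d fun i t => Complex.exp ((-(2 * π * Complex.I) * (q i : ℂ)) * t)]
  simp_rw [setIntegral_Ico_exp_int_mul]
  split_ifs with hq
  · simp [hq]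
  · obtain ⟨i, hi⟩ := Function.ne_iff.mp hq
    exact Finset.prod_eq_zero (Finset.mem_univ i) (if_neg hi)

section Characters

variable (d : ℕ)

def latticeChar (q : Fin d → ℤ) (x : EuclideanSpace ℝ (Fin d)) : ℂ :=
  Complex.exp ((2 * π * Complex.I) * ((∑ i, (q i : ℝ) * x i : ℝ) : ℂ))

lemma norm_latticeChar (q : Fin d → ℤ) (x : EuclideanSpace ℝ (Fin d)) :
    ‖latticeChar d q x‖ = 1 := by
  rw [latticeChar, Complex.norm_exp]
  simp [mul_comm]

lemma conj_latticeChar (q : Fin d → ℤ) (x : EuclideanSpace ℝ (Fin d)) :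
    starRingEnd ℂ (latticeChar d q x) =
      Complex.exp (-(2 * π * Complex.I) * ((∑ i, (q i : ℝ) * x i : ℝ) : ℂ)) := by
  rw [latticeChar, ← Complex.exp_conj]
  simp only [map_mul, Complex.conj_I, Complex.conj_ofReal, map_ofNat]
  ring_nf

lemma memLp_latticeChar (q : Fin d → ℤ) :
    MemLp (latticeChar d q) 2 (volume.restrict (Qcell d)) :=
  MemLp.of_bound (by unfold latticeChar; fun_prop : Continuous (latticeChar d q)).aestronglyMeasurable
    1 (Filter.Eventually.of_forall fun x => (norm_latticeChar d q x).le)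

lemma orthonormal_latticeChar :
    Orthonormal ℂ fun q : Fin d → ℤ => (memLp_latticeChar d q).toLp (latticeChar d q) := by
  rw [orthonormal_iff_ite]
  intro q p
  have hinner : inner ℂ ((memLp_latticeChar d q).toLp _) ((memLp_latticeChar d p).toLp _) =
      ∫ x in Qcell d, starRingEnd ℂ (latticeChar d q x) * latticeChar d p x := by
    rw [L2.inner_def]
    refine integral_congr_ae ?_
    filter_upwards [(memLp_latticeChar d q).coeFn_toLp, (memLp_latticeChar d p).coeFn_toLp]
      with x hq hp
    rw [RCLike.inner_apply, hq, hp, mul_comm]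
  have hprod : ∀ x : EuclideanSpace ℝ (Fin d),
      starRingEnd ℂ (latticeChar d q x) * latticeChar d p x =
        Complex.exp (-(2 * π * Complex.I) * ((∑ i, ((q - p) i : ℝ) * x i : ℝ) : ℂ)) := by
    intro x
    rw [conj_latticeChar, latticeChar, ← Complex.exp_add]
    simp only [Pi.sub_apply, Int.cast_sub, sub_mul, Finset.sum_sub_distrib]
    push_cast
    ring_nf
  simp_rw [hinner, hprod, setIntegral_Qcell_exp, sub_eq_zero]

variable {d}

lemma fCoeff_eq_inner {f : EuclideanSpace ℝ (Fin d) → ℝ}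
    (hf : MemLp (fun x => (f x : ℂ)) 2 (volume.restrict (Qcell d))) (q : Fin d → ℤ) :
    fCoeff d f q = inner ℂ ((memLp_latticeChar d q).toLp (latticeChar d q)) (hf.toLp _) := by
  rw [L2.inner_def, fCoeff]
  refine (integral_congr_ae ?_).symm
  filter_upwards [(memLp_latticeChar d q).coeFn_toLp, hf.coeFn_toLp] with x hq hx
  rw [RCLike.inner_apply, hq, hx, conj_latticeChar, mul_comm]

lemma summable_sq_norm_fCoeff {f : EuclideanSpace ℝ (Fin d) → ℝ}
    (hf : MemLp (fun x => (f x : ℂ)) 2 (volume.restrict (Qcell d))) :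
    Summable fun q => ‖fCoeff d f q‖ ^ 2 := by
  simpa only [← fCoeff_eq_inner hf] using
    (orthonormal_latticeChar d).inner_products_summable (x := hf.toLp _)

end Characters

lemma fCoeff_const (d : ℕ) (a : ℝ) (q : Fin d → ℤ) :
    fCoeff d (fun _ => a) q = if q = 0 then (a : ℂ) else 0 := by
  rw [fCoeff, integral_const_mul, setIntegral_Qcell_exp]
  split_ifs <;> simp

lemma fCoeff_zero (d : ℕ) (f : EuclideanSpace ℝ (Fin d) → ℝ) :
    fCoeff d f 0 = ((∫ x in Qcell d, f x : ℝ) : ℂ) := by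
  simp only [fCoeff, Pi.zero_apply, Int.cast_zero, zero_mul, Finset.sum_const_zero,
    Complex.ofReal_zero, mul_zero, Complex.exp_zero, mul_one]
  exact integral_ofReal

lemma sq_setIntegral_div_le_tsum {d : ℕ} {κ : ℝ} (hκ : κ ≠ 0) {f : EuclideanSpace ℝ (Fin d) → ℝ}
    (hf : MemLp (fun x => (f x : ℂ)) 2 (volume.restrict (Qcell d))) :
    (∫ x in Qcell d, f x) ^ 2 / κ ^ 2 ≤
      ∑' q : Fin d → ℤ, ‖fCoeff d f q‖ ^ 2 / (κ ^ 2 + 4 * π ^ 2 * ∑ i, ((q i : ℝ)) ^ 2) := by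
  have hnonneg : ∀ q : Fin d → ℤ,
      0 ≤ ‖fCoeff d f q‖ ^ 2 / (κ ^ 2 + 4 * π ^ 2 * ∑ i, ((q i : ℝ)) ^ 2) :=
    fun q => by positivity
  have hsum : Summable fun q : Fin d → ℤ =>
      ‖fCoeff d f q‖ ^ 2 / (κ ^ 2 + 4 * π ^ 2 * ∑ i, ((q i : ℝ)) ^ 2) :=
    ((summable_sq_norm_fCoeff hf).div_const (κ ^ 2)).of_nonneg_of_le hnonneg fun q =>
      div_le_div_of_nonneg_left (sq_nonneg _) (by positivity) (le_add_of_nonneg_right (by positivity))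
  refine le_of_eq_of_le ?_ (hsum.le_tsum 0 fun q _ => hnonneg q)
  rw [fCoeff_zero, Complex.norm_real, Real.norm_eq_abs, sq_abs]
  simp

lemma memLp_uSet (d : ℕ) (ub : ℝ) {A : Set (EuclideanSpace ℝ (Fin d))} (hA : MeasurableSet A) :
    MemLp (fun x => (uSet d ub A x : ℂ)) 2 (volume.restrict (Qcell d)) := by
  refine MemLp.of_bound ?_ (2 + |1 + ub|) (Filter.Eventually.of_forall fun x => ?_)
  · exact (Complex.measurable_ofReal.comp
      (((measurable_const.indicator hA).sub measurable_const).sub measurable_const)).aestronglyMeasurable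
  · rw [Complex.norm_real, uSet, sub_sub]
    refine (abs_sub _ _).trans ?_
    gcongr
    by_cases hx : x ∈ A <;> simp [hx]

lemma setIntegral_uSet (d : ℕ) (ub : ℝ) {A : Set (EuclideanSpace ℝ (Fin d))} (hA : MeasurableSet A) :
    ∫ x in Qcell d, uSet d ub A x = 2 * (volume (A ∩ Qcell d)).toReal - (1 + ub) := by
  simp only [uSet, sub_sub]
  rw [integral_sub ((integrable_const (2 : ℝ)).indicator hA) (integrable_const _),
    integral_indicator_const _ hA, integral_const, Measure.real, Measure.real,
    Measure.restrict_apply hA, Measure.restrict_apply_univ, volume_Qcell]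
  simp [mul_comm]

lemma nonlocalSharp_empty (d : ℕ) (κ ub : ℝ) :
    nonlocalSharp d κ ub ∅ = (1 + ub) ^ 2 / (2 * κ ^ 2) := by
  have hu : uSet d ub ∅ = fun _ => -(1 + ub) := by
    funext x
    simp only [uSet, Set.indicator_empty]
    ring
  rw [nonlocalSharp, hu, tsum_eq_single 0 fun q hq => by simp [fCoeff_const, hq], fCoeff_const,
    if_pos rfl, Complex.norm_real, Real.norm_eq_abs, sq_abs]
  simp only [Pi.zero_apply, Int.cast_zero, ne_eq, OfNat.ofNat_ne_zero, not_false_eq_true,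
    zero_pow, Finset.sum_const_zero, mul_zero, add_zero]
  ring

lemma zeroMode_le_nonlocalSharp {d : ℕ} {κ : ℝ} (hκ : κ ≠ 0) (ub : ℝ)
    {A : Set (EuclideanSpace ℝ (Fin d))} (hA : MeasurableSet A) :
    (2 * (volume (A ∩ Qcell d)).toReal - (1 + ub)) ^ 2 / (2 * κ ^ 2) ≤ nonlocalSharp d κ ub A := by
  have h := sq_setIntegral_div_le_tsum hκ (memLp_uSet d ub hA)
  rw [setIntegral_uSet d ub hA] at h
  calc _ = 1 / 2 * ((2 * (volume (A ∩ Qcell d)).toReal - (1 + ub)) ^ 2 / κ ^ 2) := by ring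
    _ ≤ nonlocalSharp d κ ub A := mul_le_mul_of_nonneg_left h (by norm_num)

lemma sharpEnergy_empty (d : ℕ) (κ ε ub : ℝ) :
    sharpEnergy d κ ε ub ∅ = ENNReal.ofReal ((1 + ub) ^ 2 / (2 * κ ^ 2)) := by
  simp [sharpEnergy, nonlocalSharp_empty]

section ComparisonWithEmpty

variable {d : ℕ} {κ ε ub : ℝ} {A : Set (EuclideanSpace ℝ (Fin d))}

lemma volume_inter_Qcell_le_of_sharpEnergy_le_empty (hκ : κ ≠ 0) (hub : 0 ≤ 1 + ub)
    (hA : MeasurableSet A) (hE : sharpEnergy d κ ε ub A ≤ sharpEnergy d κ ε ub ∅) :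
    volume (A ∩ Qcell d) ≤ ENNReal.ofReal (1 + ub) := by
  have hfin : volume (A ∩ Qcell d) ≠ ⊤ :=
    ne_top_of_le_ne_top (by simp [volume_Qcell]) (measure_mono Set.inter_subset_right)
  have hnonlocal : nonlocalSharp d κ ub A ≤ (1 + ub) ^ 2 / (2 * κ ^ 2) := by
    rw [sharpEnergy_empty] at hE
    exact (ENNReal.ofReal_le_ofReal_iff (by positivity)).mp (le_add_self.trans hE)
  have hsq := (zeroMode_le_nonlocalSharp hκ ub hA).trans hnonlocal
  rw [div_le_div_iff_of_pos_right (by positivity), sq_le_sq, abs_of_nonneg hub, abs_le] at hsq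
  rw [← ENNReal.ofReal_toReal hfin]
  exact ENNReal.ofReal_le_ofReal (by linarith [hsq.2, ENNReal.toReal_nonneg (a := volume (A ∩ Qcell d))])

lemma hausdorffMeasure_frontier_le_of_sharpEnergy_le_empty (hε : 0 < ε)
    (hE : sharpEnergy d κ ε ub A ≤ sharpEnergy d κ ε ub ∅) :
    μH[(d : ℝ) - 1] (frontier A ∩ Qcell d) ≤ ENNReal.ofReal ((1 + ub) ^ 2 / (2 * κ ^ 2) / ε) := by
  rw [sharpEnergy_empty] at hE
  rw [ENNReal.ofReal_div_of_pos hε, ENNReal.le_div_iff_mul_le (.inl (ENNReal.ofReal_pos.mpr hε).ne')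
    (.inl ENNReal.ofReal_ne_top), mul_comm]
  exact le_self_add.trans hE

end ComparisonWithEmpty

lemma one_add_ubar (δ ε : ℝ) :
    1 + ubar δ ε = δ * (ε ^ ((2 : ℝ) / 3) * |Real.log ε| ^ ((1 : ℝ) / 3)) := by
  rw [ubar]
  ring

lemma one_add_ubar_sq_div_self (δ : ℝ) {ε : ℝ} (hε : 0 < ε) :
    (1 + ubar δ ε) ^ 2 / ε = δ ^ 2 * (ε ^ ((1 : ℝ) / 3) * |Real.log ε| ^ ((2 : ℝ) / 3)) := by
  have hpow : ∀ {x : ℝ}, 0 ≤ x → ∀ a : ℝ, (x ^ a) ^ 2 = x ^ (2 * a) := fun hx a => by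
    rw [← Real.rpow_natCast, ← Real.rpow_mul hx, mul_comm]
    norm_num
  have hε13 : ε ^ ((4 : ℝ) / 3) / ε = ε ^ ((1 : ℝ) / 3) := by
    rw [← Real.rpow_sub_one hε.ne']
    norm_num
  rw [one_add_ubar, mul_pow, mul_pow, hpow hε.le, hpow (abs_nonneg _), ← hε13]
  norm_num
  ring

/-- a priori bounds on minimizers. For `ū(ε) = −1 + ε^{2/3}|ln ε|^{1/3}δ̄`,
there are `C > 0`, `ε₀ ∈ (0,1)` such that for `0 < ε ≤ ε₀` any minimizer `A` of the
sharp interface energy among `ℤ²`-periodic measurable sets satisfies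
`|A ∩ Q| ≤ C·ε^{2/3}|ln ε|^{1/3}` and `H¹(∂A ∩ Q) ≤ C·ε^{1/3}|ln ε|^{2/3}`. -/
theorem statement_8 (κ δ : ℝ) (hκ : 0 < κ) (hδ : 0 < δ) :
    ∃ C > (0 : ℝ), ∃ ε₀ : ℝ, 0 < ε₀ ∧ ε₀ < 1 ∧ ∀ ε : ℝ, 0 < ε → ε ≤ ε₀ →
      ∀ A : Set (EuclideanSpace ℝ (Fin 2)), MeasurableSet A → IsPeriodicSet 2 A →
        (∀ B : Set (EuclideanSpace ℝ (Fin 2)), MeasurableSet B → IsPeriodicSet 2 B →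
          sharpEnergy 2 κ ε (ubar δ ε) A ≤ sharpEnergy 2 κ ε (ubar δ ε) B) →
        volume (A ∩ Qcell 2) ≤
            ENNReal.ofReal (C * ε ^ ((2 : ℝ) / 3) * |Real.log ε| ^ ((1 : ℝ) / 3)) ∧
        μH[(1 : ℝ)] (frontier A ∩ Qcell 2) ≤
            ENNReal.ofReal (C * ε ^ ((1 : ℝ) / 3) * |Real.log ε| ^ ((2 : ℝ) / 3)) := by
  refine ⟨δ + δ ^ 2 / (2 * κ ^ 2), by positivity, 1 / 2, by norm_num, by norm_num, ?_⟩
  intro ε hε _ A hA _ hmin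
  have hE := hmin ∅ MeasurableSet.empty fun _ _ => Iff.rfl
  have hub : 0 ≤ 1 + ubar δ ε := by rw [one_add_ubar]; positivity
  constructor
  · refine (volume_inter_Qcell_le_of_sharpEnergy_le_empty hκ.ne' hub hA hE).trans
      (ENNReal.ofReal_le_ofReal ?_)
    rw [one_add_ubar, mul_assoc]
    gcongr
    exact le_add_of_nonneg_right (by positivity)
  · have hP := hausdorffMeasure_frontier_le_of_sharpEnergy_le_empty hε hE
    rw [show ((2 : ℕ) : ℝ) - 1 = 1 by norm_num, div_right_comm, one_add_ubar_sq_div_self δ hε]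
      at hP
    refine hP.trans (ENNReal.ofReal_le_ofReal ?_)
    rw [mul_assoc (δ + _), mul_div_right_comm]
    gcongr
    exact le_add_of_nonneg_left hδ.le
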